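/- arXiv:2602.10428 — 6 statements merged into one kernel-verified Lean document; each statement's English description precedes it below -/
import Mathlib

section
/- Suppose a : {0,...,N-1} × {0,...,N-1} → ℝ≥0 satisfies ex-post IR (a(k,i)=0 for k<i), monotonicity of total allocation probability P(i) := ∑_{k≥i} a(k,i) non-increasing in i, and the incentive constraints IC_{r,s} and IC_{s,t} for types r < s < t (where IC_{i,j} reads ∑_{k≥i}(x_k-θ_i)a(k,i) ≥ ∑_{k≥i}(x_k-θ_i)a(k,j)). Then the non-local upward constraint IC_{r,t} holds. -/
/-!
By ex-post IR the report `j ≥ s` only allocates at positions `k ≥ s`, so type `r` values it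
exactly as type `s` does plus `(θ_s - θ_r) P(j)`. Hence `U_r(t) = U_s(t) + (θ_s - θ_r) P(t)
≤ U_s(s) + (θ_s - θ_r) P(s) = U_r(s) ≤ U_r(r)`, using `IC_{s,t}`, monotonicity of `P` and
`IC_{r,s}` in turn.
-/

open Finset

/-- `U_i(j)`: the payoff of true type `i` reporting `j`. -/
def reportPayoff (N : ℕ) (x θ : ℕ → ℝ) (a : ℕ → ℕ → ℝ) (i j : ℕ) : ℝ :=
  ∑ k ∈ Ico i N, (x k - θ i) * a k j

def allocProb (N : ℕ) (a : ℕ → ℕ → ℝ) (j : ℕ) : ℝ :=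
  ∑ k ∈ Ico j N, a k j

lemma sum_Ico_eq_sum_Ico_of_eq_zero {M : Type*} [AddCommMonoid M] {g : ℕ → M} {i j N : ℕ}
    (hij : i ≤ j) (hg : ∀ k < j, g k = 0) :
    ∑ k ∈ Ico i N, g k = ∑ k ∈ Ico j N, g k := by
  refine (sum_subset (Ico_subset_Ico_left hij) fun k hk hk' => hg k ?_).symm
  simp only [mem_Ico] at hk hk'
  omega

lemma sum_sub_mul_eq_sum_sub_mul_add {ι : Type*} (S : Finset ι) (x b : ι → ℝ) (c c' : ℝ) :
    ∑ k ∈ S, (x k - c) * b k = ∑ k ∈ S, (x k - c') * b k + (c' - c) * ∑ k ∈ S, b k := by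
  rw [mul_sum, ← sum_add_distrib]
  exact sum_congr rfl fun k _ => by ring

lemma reportPayoff_eq_add {N i i' j : ℕ} (x θ : ℕ → ℝ) {a : ℕ → ℕ → ℝ}
    (hii' : i ≤ i') (hi'j : i' ≤ j) (hIR : ∀ k < j, a k j = 0) :
    reportPayoff N x θ a i j
      = reportPayoff N x θ a i' j + (θ i' - θ i) * allocProb N a j := by
  have hIR' : ∀ k < i', a k j = 0 := fun k hk => hIR k (hk.trans_le hi'j)
  have hP : ∑ k ∈ Ico i' N, a k j = allocProb N a j :=
    sum_Ico_eq_sum_Ico_of_eq_zero hi'j hIR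
  rw [reportPayoff, reportPayoff,
    sum_Ico_eq_sum_Ico_of_eq_zero hii' fun k hk => by rw [hIR' k hk, mul_zero],
    sum_sub_mul_eq_sum_sub_mul_add, hP]

theorem reportPayoff_le_of_upward_chain {N r s t : ℕ} {x θ : ℕ → ℝ} {a : ℕ → ℕ → ℝ}
    (hrs : r ≤ s) (hst : s ≤ t) (hθ : θ r ≤ θ s) (hIR : ∀ k i, k < i → a k i = 0)
    (hMON : allocProb N a t ≤ allocProb N a s)
    (hICrs : reportPayoff N x θ a r s ≤ reportPayoff N x θ a r r)
    (hICst : reportPayoff N x θ a s t ≤ reportPayoff N x θ a s s) :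
    reportPayoff N x θ a r t ≤ reportPayoff N x θ a r r :=
  calc reportPayoff N x θ a r t
      = reportPayoff N x θ a s t + (θ s - θ r) * allocProb N a t :=
        reportPayoff_eq_add x θ hrs hst (hIR · t)
    _ ≤ reportPayoff N x θ a s s + (θ s - θ r) * allocProb N a s :=
        add_le_add hICst (mul_le_mul_of_nonneg_left hMON (sub_nonneg.2 hθ))
    _ = reportPayoff N x θ a r s :=
        (reportPayoff_eq_add x θ hrs le_rfl (hIR · s)).symm
    _ ≤ reportPayoff N x θ a r r := hICrs

theorem stmt_2_general (N r s t : ℕ) (hrs : r < s) (hst : s < t) (htN : t < N)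
    (a : ℕ → ℕ → ℝ)
    (hIR : ∀ k i, k < i → a k i = 0)
    (hMON : ∀ i j, i ≤ j → j < N →
      ∑ k ∈ Finset.Ico j N, a k j ≤ ∑ k ∈ Finset.Ico i N, a k i)
    (hICrs : ∑ k ∈ Finset.Ico r N,
        ((k : ℝ) / ((N : ℝ) - 1) - (r : ℝ) / ((N : ℝ) - 1)) * a k s
      ≤ ∑ k ∈ Finset.Ico r N,
        ((k : ℝ) / ((N : ℝ) - 1) - (r : ℝ) / ((N : ℝ) - 1)) * a k r)
    (hICst : ∑ k ∈ Finset.Ico s N,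
        ((k : ℝ) / ((N : ℝ) - 1) - (s : ℝ) / ((N : ℝ) - 1)) * a k t
      ≤ ∑ k ∈ Finset.Ico s N,
        ((k : ℝ) / ((N : ℝ) - 1) - (s : ℝ) / ((N : ℝ) - 1)) * a k s) :
    ∑ k ∈ Finset.Ico r N,
        ((k : ℝ) / ((N : ℝ) - 1) - (r : ℝ) / ((N : ℝ) - 1)) * a k t
      ≤ ∑ k ∈ Finset.Ico r N,
        ((k : ℝ) / ((N : ℝ) - 1) - (r : ℝ) / ((N : ℝ) - 1)) * a k r := by
  have hN : (0 : ℝ) ≤ (N : ℝ) - 1 := by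
    rw [sub_nonneg, Nat.one_le_cast]
    omega
  exact reportPayoff_le_of_upward_chain (x := fun k => (k : ℝ) / ((N : ℝ) - 1))
    (θ := fun i => (i : ℝ) / ((N : ℝ) - 1)) hrs.le hst.le
    (div_le_div_of_nonneg_right (Nat.cast_le.2 hrs.le) hN) hIR
    (hMON s t hst.le htN) hICrs hICst

/-- IC constraints compose transitively upward: for types `r < s < t`,
ex-post IR, allocation-probability monotonicity, `IC_{r,s}` and `IC_{s,t}`
imply the non-local upward constraint `IC_{r,t}`. -/
theorem stmt_2 (N r s t : ℕ) (hN : 2 ≤ N) (hrs : r < s) (hst : s < t) (htN : t < N)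
    (a : ℕ → ℕ → ℝ)
    (hnn : ∀ k i, 0 ≤ a k i)
    (hIR : ∀ k i, k < i → a k i = 0)
    (hMON : ∀ i j, i ≤ j → j < N →
      ∑ k ∈ Finset.Ico j N, a k j ≤ ∑ k ∈ Finset.Ico i N, a k i)
    (hICrs : ∑ k ∈ Finset.Ico r N,
        ((k : ℝ) / ((N : ℝ) - 1) - (r : ℝ) / ((N : ℝ) - 1)) * a k s
      ≤ ∑ k ∈ Finset.Ico r N,
        ((k : ℝ) / ((N : ℝ) - 1) - (r : ℝ) / ((N : ℝ) - 1)) * a k r)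
    (hICst : ∑ k ∈ Finset.Ico s N,
        ((k : ℝ) / ((N : ℝ) - 1) - (s : ℝ) / ((N : ℝ) - 1)) * a k t
      ≤ ∑ k ∈ Finset.Ico s N,
        ((k : ℝ) / ((N : ℝ) - 1) - (s : ℝ) / ((N : ℝ) - 1)) * a k s) :
    ∑ k ∈ Finset.Ico r N,
        ((k : ℝ) / ((N : ℝ) - 1) - (r : ℝ) / ((N : ℝ) - 1)) * a k t
      ≤ ∑ k ∈ Finset.Ico r N,
        ((k : ℝ) / ((N : ℝ) - 1) - (r : ℝ) / ((N : ℝ) - 1)) * a k r :=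
  stmt_2_general N r s t hrs hst htN a hIR hMON hICrs hICst
end

section
/- Suppose 1/F is convex on the grid, i.e. 2/F(i) ≤ 1/F(i-1) + 1/F(i+1) for all 0 < i < N-1, and let a be a feasible direct mechanism (ex-post IR, all IC constraints IC_{i,j}, agent feasibility ∑_k a(k,i) ≤ 1). Define c(k) = ∑_{j=0}^{k} a(k,j)·f(j)/F(k). Then ∑_{k=0}^{N-1} c(k) ≤ ∑_{k=0}^{N-1} a(k,0) ≤ 1; in particular the common lottery ã(k,i) = c(k)·1[i ≤ k] satisfies agent feasibility for every type. -/
/-!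
The inequality comes from a potential that decreases along the grid. Let `U(i, j)` be the
utility of type `i` reporting `j`, `D i = ∑_{j<i} f j (U(i, i) - U(i, j))` the weighted slack of
the downward IC constraints at `i`, and `T m` the `f`-weighted probability that types `< m`
receive an outcome `≥ m`. The potential
`Ψ i = ∑_{k≤i} c k + T (i+1) / F i + (1/F (i-1) - 1/F i) D i`
satisfies `Ψ 0 = ∑_k a(k,0)`, `Ψ (N-1) = ∑_k c k`, and
`Ψ (i+1) = Ψ i - f (i+1)/F (i+1) (U(i, i) - U(i, i+1)) - (1/F (i-1) - 2/F i + 1/F (i+1)) D i`,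
which is the paper's combination of IC constraints taken one grid step at a time. Convexity of
`1/F` makes each step nonpositive. At `i = 0` the truncated `i - 1` is harmless since `D 0 = 0`.
-/

open Finset

namespace CommonLottery

noncomputable section

variable (N : ℕ) (f F : ℕ → ℝ) (a : ℕ → ℕ → ℝ)

/-- The grid is rescaled to `x_k = k`; IC constraints are invariant under this rescaling. -/
def utility (i j : ℕ) : ℝ := ∑ k ∈ Ico i N, ((k : ℝ) - i) * a k j

def tail (m j : ℕ) : ℝ := ∑ k ∈ Ico m N, a k j

def lottery (k : ℕ) : ℝ := ∑ j ∈ range (k + 1), a k j * f j / F k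

def tailMass (m : ℕ) : ℝ := ∑ j ∈ range m, f j * tail N a m j

def downwardSlack (i : ℕ) : ℝ := ∑ j ∈ range i, f j * (utility N a i i - utility N a i j)

def potential (i : ℕ) : ℝ :=
  ∑ k ∈ range (i + 1), lottery f F a k + tailMass N f a (i + 1) / F i
    + (1 / F (i - 1) - 1 / F i) * downwardSlack N f a i

variable {N f F a}

theorem sum_grid_mul_eq_utility_div (i j : ℕ) :
    ∑ k ∈ Ico i N, ((k : ℝ) / ((N : ℝ) - 1) - (i : ℝ) / ((N : ℝ) - 1)) * a k j
      = utility N a i j / ((N : ℝ) - 1) := by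
  rw [utility, sum_div]
  exact sum_congr rfl fun k _ => by ring

theorem utility_sub_utility_succ (i j : ℕ) :
    utility N a i j - utility N a (i + 1) j = tail N a (i + 1) j := by
  rcases lt_or_ge i N with hi | hi
  · rw [utility, utility, tail, sum_eq_sum_Ico_succ_bot hi, sub_self, zero_mul, zero_add,
      ← sum_sub_distrib]
    exact sum_congr rfl fun k _ => by push_cast; ring
  · simp [utility, tail, Ico_eq_empty_of_le hi, Ico_eq_empty_of_le (hi.trans i.le_succ)]

theorem utility_pred (j : ℕ) : utility N a (N - 1) j = 0 :=
  sum_eq_zero fun k hk => by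
    obtain rfl : k = N - 1 := by rw [mem_Ico] at hk; omega
    rw [sub_self, zero_mul]

theorem tail_eq_add_tail_succ {m : ℕ} (hm : m < N) (j : ℕ) :
    tail N a m j = a m j + tail N a (m + 1) j :=
  sum_eq_sum_Ico_succ_bot hm _

theorem lottery_mul (m : ℕ) (hm : m < N) (hFm : F m ≠ 0) :
    lottery f F a m * F m = tailMass N f a m + f m * tail N a m m - tailMass N f a (m + 1) := by
  have hrow : lottery f F a m * F m = ∑ j ∈ range (m + 1), f j * a m j := by
    rw [lottery, sum_mul]
    exact sum_congr rfl fun j _ => by field_simp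
  have htail : ∑ j ∈ range (m + 1), (f j * a m j + f j * tail N a (m + 1) j)
      = ∑ j ∈ range (m + 1), f j * tail N a m j :=
    sum_congr rfl fun j _ => by rw [tail_eq_add_tail_succ hm]; ring
  rw [hrow, tailMass, tailMass, ← sum_range_succ, eq_sub_iff_add_eq, ← sum_add_distrib, htail]

theorem downwardSlack_succ_sub_tailMass (hF : ∀ k, F k = ∑ j ∈ range (k + 1), f j) (i : ℕ) :
    downwardSlack N f a (i + 1) - tailMass N f a (i + 1)
      = F i * (utility N a (i + 1) (i + 1) - utility N a i i) + downwardSlack N f a i := by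
  have hterm : ∀ j, f j * (utility N a (i + 1) (i + 1) - utility N a (i + 1) j)
      - f j * tail N a (i + 1) j
      = f j * (utility N a (i + 1) (i + 1) - utility N a i i)
        + f j * (utility N a i i - utility N a i j) := fun j => by
    rw [← utility_sub_utility_succ]; ring
  rw [downwardSlack, tailMass, ← sum_sub_distrib, sum_congr rfl fun j _ => hterm j,
    sum_add_distrib, ← sum_mul, ← hF, sum_range_succ _ i, sub_self, mul_zero, add_zero,
    downwardSlack]

theorem potential_succ (hF : ∀ k, F k = ∑ j ∈ range (k + 1), f j) {i : ℕ} (hi : i + 1 < N)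
    (hFi : F i ≠ 0) (hFi' : F (i + 1) ≠ 0) :
    potential N f F a (i + 1) = potential N f F a i
      - f (i + 1) / F (i + 1) * (utility N a i i - utility N a i (i + 1))
      - (1 / F (i - 1) - 2 / F i + 1 / F (i + 1)) * downwardSlack N f a i := by
  have hlottery := eq_div_of_mul_eq hFi' (lottery_mul (f := f) (a := a) (i + 1) hi hFi')
  have hslack := downwardSlack_succ_sub_tailMass (N := N) (a := a) hF i
  have hutility := utility_sub_utility_succ (N := N) (a := a) i (i + 1)
  have hweight : f (i + 1) / F (i + 1) = (1 / F i - 1 / F (i + 1)) * F i := by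
    rw [hF (i + 1), sum_range_succ, ← hF] at hFi' ⊢
    field_simp
    ring
  rw [potential, potential, sum_range_succ _ (i + 1), Nat.add_sub_cancel]
  linear_combination hlottery + (1 / F i - 1 / F (i + 1)) * hslack
    + (utility N a i i - utility N a (i + 1) (i + 1)) * hweight
    - f (i + 1) / F (i + 1) * hutility

theorem cdf_pos (hfpos : ∀ i < N, 0 < f i) (hF : ∀ k, F k = ∑ j ∈ range (k + 1), f j) {k : ℕ}
    (hk : k < N) : 0 < F k := by
  rw [hF]
  exact sum_pos (fun j hj => hfpos j (by rw [mem_range] at hj; omega)) nonempty_range_add_one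

theorem downwardSlack_nonneg {i : ℕ} (hf : ∀ j < i, 0 ≤ f j)
    (hIC : ∀ j < i, utility N a i j ≤ utility N a i i) : 0 ≤ downwardSlack N f a i :=
  sum_nonneg fun j hj => by
    rw [mem_range] at hj
    exact mul_nonneg (hf j hj) (sub_nonneg.2 (hIC j hj))

theorem potential_succ_le (hfpos : ∀ i < N, 0 < f i) (hF : ∀ k, F k = ∑ j ∈ range (k + 1), f j)
    (hconv : ∀ i, 0 < i → i + 1 < N → 2 / F i ≤ 1 / F (i - 1) + 1 / F (i + 1))
    (hIC : ∀ i < N, ∀ j < N, utility N a i j ≤ utility N a i i) {i : ℕ} (hi : i + 1 < N) :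
    potential N f F a (i + 1) ≤ potential N f F a i := by
  have hFi := cdf_pos hfpos hF (i.lt_succ_self.trans hi)
  have hFi' := cdf_pos hfpos hF hi
  have hupward : 0 ≤ f (i + 1) / F (i + 1) * (utility N a i i - utility N a i (i + 1)) :=
    mul_nonneg (div_pos (hfpos _ hi) hFi').le (sub_nonneg.2 (hIC i (by omega) _ hi))
  have hdownward : 0 ≤ (1 / F (i - 1) - 2 / F i + 1 / F (i + 1)) * downwardSlack N f a i := by
    rcases Nat.eq_zero_or_pos i with rfl | hi0
    · simp [downwardSlack]
    · refine mul_nonneg (by linarith [hconv i hi0 hi]) (downwardSlack_nonneg ?_ ?_)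
      · exact fun j hj => (hfpos j (by omega)).le
      · exact fun j hj => hIC i (by omega) j (by omega)
  rw [potential_succ hF hi hFi.ne' hFi'.ne']
  linarith

theorem potential_zero (hN : 0 < N) (hF : ∀ k, F k = ∑ j ∈ range (k + 1), f j) (hf0 : f 0 ≠ 0) :
    potential N f F a 0 = ∑ k ∈ range N, a k 0 := by
  have hF0 : F 0 = f 0 := by rw [hF, sum_range_one]
  rw [range_eq_Ico, ← tail, tail_eq_add_tail_succ hN]
  simp [potential, lottery, tailMass, downwardSlack, hF0, hf0]

theorem potential_pred (hN : 0 < N) :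
    potential N f F a (N - 1) = ∑ k ∈ range N, lottery f F a k := by
  simp [potential, tailMass, tail, downwardSlack, utility_pred, Nat.sub_add_cancel hN]

theorem sum_lottery_le_sum_allocation_zero (hN : 0 < N) (hfpos : ∀ i < N, 0 < f i)
    (hF : ∀ k, F k = ∑ j ∈ range (k + 1), f j)
    (hconv : ∀ i, 0 < i → i + 1 < N → 2 / F i ≤ 1 / F (i - 1) + 1 / F (i + 1))
    (hIC : ∀ i < N, ∀ j < N, utility N a i j ≤ utility N a i i) :
    ∑ k ∈ range N, lottery f F a k ≤ ∑ k ∈ range N, a k 0 := by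
  have hdecr : ∀ i < N, potential N f F a i ≤ potential N f F a 0 := by
    intro i hi
    induction i with
    | zero => exact le_rfl
    | succ i ih => exact (potential_succ_le hfpos hF hconv hIC hi).trans (ih (by omega))
  rw [← potential_pred hN, ← potential_zero hN hF (hfpos 0 hN).ne']
  exact hdecr _ (by omega)

theorem lottery_nonneg (hfpos : ∀ i < N, 0 < f i) (hF : ∀ k, F k = ∑ j ∈ range (k + 1), f j)
    (hnn : ∀ k i, 0 ≤ a k i) {k : ℕ} (hk : k < N) : 0 ≤ lottery f F a k :=
  sum_nonneg fun j hj => by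
    rw [mem_range] at hj
    exact div_nonneg (mul_nonneg (hnn k j) (hfpos j (by omega)).le) (cdf_pos hfpos hF hk).le

end

end CommonLottery

open CommonLottery

theorem stmt_8_general (N : ℕ) (hN : 2 ≤ N) (f F : ℕ → ℝ)
    (hfpos : ∀ i, i < N → 0 < f i)
    (hF : ∀ k, F k = ∑ j ∈ Finset.range (k + 1), f j)
    (hconv : ∀ i, 0 < i → i + 1 < N → 2 / F i ≤ 1 / F (i - 1) + 1 / F (i + 1))
    (a : ℕ → ℕ → ℝ)
    (hnn : ∀ k i, 0 ≤ a k i)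
    (hIC : ∀ i, i < N → ∀ j, j < N →
      ∑ k ∈ Finset.Ico i N, ((k : ℝ) / ((N : ℝ) - 1) - (i : ℝ) / ((N : ℝ) - 1)) * a k j
        ≤ ∑ k ∈ Finset.Ico i N, ((k : ℝ) / ((N : ℝ) - 1) - (i : ℝ) / ((N : ℝ) - 1)) * a k i)
    (hagent : ∀ i, i < N → ∑ k ∈ Finset.range N, a k i ≤ 1) :
    (∑ k ∈ Finset.range N, ∑ j ∈ Finset.range (k + 1), a k j * f j / F k
        ≤ ∑ k ∈ Finset.range N, a k 0)
    ∧ (∑ k ∈ Finset.range N, a k 0 ≤ 1)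
    ∧ (∀ i, i < N →
        ∑ k ∈ Finset.Ico i N, ∑ j ∈ Finset.range (k + 1), a k j * f j / F k ≤ 1) := by
  have hN0 : 0 < N := by omega
  have hscale : (0 : ℝ) < (N : ℝ) - 1 := by
    have : (2 : ℝ) ≤ N := by exact_mod_cast hN
    linarith
  have hIC' : ∀ i < N, ∀ j < N, utility N a i j ≤ utility N a i i := fun i hi j hj => by
    have h := hIC i hi j hj
    rwa [sum_grid_mul_eq_utility_div, sum_grid_mul_eq_utility_div,
      div_le_div_iff_of_pos_right hscale] at h
  have hcommon := sum_lottery_le_sum_allocation_zero hN0 hfpos hF hconv hIC'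
  have hlowest := hagent 0 hN0
  refine ⟨hcommon, hlowest, fun i _ => ?_⟩
  calc ∑ k ∈ Ico i N, lottery f F a k
      ≤ ∑ k ∈ range N, lottery f F a k :=
        sum_le_sum_of_subset_of_nonneg (range_eq_Ico N ▸ Ico_subset_Ico (Nat.zero_le i) le_rfl)
          fun k hk _ => lottery_nonneg hfpos hF hnn (mem_range.1 hk)
    _ ≤ 1 := hcommon.trans hlowest

/-- Main theorem (common-lottery feasibility): if `1/F` is convex on the grid,
then for any feasible direct mechanism `a`, the constructed common lottery
`c(k) = ∑_{j≤k} a(k,j)·f(j)/F(k)` satisfies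
`∑_k c(k) ≤ ∑_k a(k,0) ≤ 1`; in particular the common lottery satisfies
agent feasibility for every type. -/
theorem stmt_8 (N : ℕ) (hN : 2 ≤ N) (f F : ℕ → ℝ)
    (hfpos : ∀ i, i < N → 0 < f i)
    (hF : ∀ k, F k = ∑ j ∈ Finset.range (k + 1), f j)
    (hconv : ∀ i, 0 < i → i + 1 < N → 2 / F i ≤ 1 / F (i - 1) + 1 / F (i + 1))
    (a : ℕ → ℕ → ℝ)
    (hnn : ∀ k i, 0 ≤ a k i)
    (hIR : ∀ k i, k < i → a k i = 0)
    (hIC : ∀ i, i < N → ∀ j, j < N →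
      ∑ k ∈ Finset.Ico i N, ((k : ℝ) / ((N : ℝ) - 1) - (i : ℝ) / ((N : ℝ) - 1)) * a k j
        ≤ ∑ k ∈ Finset.Ico i N, ((k : ℝ) / ((N : ℝ) - 1) - (i : ℝ) / ((N : ℝ) - 1)) * a k i)
    (hagent : ∀ i, i < N → ∑ k ∈ Finset.range N, a k i ≤ 1) :
    (∑ k ∈ Finset.range N, ∑ j ∈ Finset.range (k + 1), a k j * f j / F k
        ≤ ∑ k ∈ Finset.range N, a k 0)
    ∧ (∑ k ∈ Finset.range N, a k 0 ≤ 1)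
    ∧ (∀ i, i < N →
        ∑ k ∈ Finset.Ico i N, ∑ j ∈ Finset.range (k + 1), a k j * f j / F k ≤ 1) :=
  stmt_8_general N hN f F hfpos hF hconv a hnn hIC hagent
end

section
/- Let s ∈ ℝ≥0^N be a target allocation vector and F positive on the grid. The common lottery with c(k) = s_k/(D·F(k)) where D = ∑_{k=0}^{N-1} s_k/F(k) is feasible (each type's total probability is at most 1, with equality for type 0) and allocates exactly mass s_k to each position k when the agent population has mass D and type distribution f with CDF F: D·∑_{i=0}^{k} c(k)·f(i) = s_k. -/
/-! Position `k` is offered with probability `c(k) = s_k / (D F(k))`, so the accepted mass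
`D c(k) F(k)` is `s_k` by construction, and the normalisation `D = ∑ s_k / F(k)` makes the
`c(k)` sum to `1`. Since the `c(k)` are nonnegative, every tail sum `∑_{k ≥ i} c(k)` is at most
the full sum. -/

open Finset

lemma sum_range_succ_pos_of_forall_lt {f : ℕ → ℝ} {N k : ℕ} (hf : ∀ i, i < N → 0 < f i)
    (hk : k < N) : 0 < ∑ j ∈ range (k + 1), f j :=
  sum_pos (fun j hj => hf j ((mem_range.1 hj).trans_le hk)) nonempty_range_add_one

lemma sum_div_mul_sum_div_eq_one {ι K : Type*} [Field K] (t : Finset ι) (s F : ι → K)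
    (hD : ∑ j ∈ t, s j / F j ≠ 0) :
    ∑ k ∈ t, s k / ((∑ j ∈ t, s j / F j) * F k) = 1 := by
  simp_rw [mul_comm _ (F _), ← div_div]
  rw [← sum_div, div_self hD]

lemma mul_sum_div_mul_sum_mul_eq {ι K : Type*} [Field K] (t : Finset ι) (f : ι → K) {D s : K}
    (hD : D ≠ 0) (hf : ∑ j ∈ t, f j ≠ 0) :
    D * ∑ i ∈ t, s / (D * ∑ j ∈ t, f j) * f i = s := by
  rw [← mul_sum]
  field_simp

theorem stmt_11_general (N : ℕ) (s f F : ℕ → ℝ) (D : ℝ)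
    (hs : ∀ k, k < N → 0 ≤ s k)
    (hfpos : ∀ i, i < N → 0 < f i)
    (hF : ∀ k, F k = ∑ j ∈ Finset.range (k + 1), f j)
    (hD : D = ∑ k ∈ Finset.range N, s k / F k) (hDpos : 0 < D) :
    (∑ k ∈ Finset.range N, s k / (D * F k) = 1) ∧
    (∀ i, i < N → ∑ k ∈ Finset.Ico i N, s k / (D * F k) ≤ 1) ∧
    (∀ k, k < N →
      D * ∑ i ∈ Finset.range (k + 1), (s k / (D * F k)) * f i = s k) := by
  have hFpos : ∀ k, k < N → 0 < F k := fun k hk =>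
    hF k ▸ sum_range_succ_pos_of_forall_lt hfpos hk
  have hc_nonneg : ∀ k ∈ range N, 0 ≤ s k / (D * F k) := fun k hk =>
    div_nonneg (hs k (mem_range.1 hk)) (mul_pos hDpos (hFpos k (mem_range.1 hk))).le
  have htotal : ∑ k ∈ range N, s k / (D * F k) = 1 := by
    subst hD
    exact sum_div_mul_sum_div_eq_one _ _ _ hDpos.ne'
  refine ⟨htotal, fun i _ => ?_, fun k hk => ?_⟩
  · rw [← htotal]
    exact sum_le_sum_of_subset_of_nonneg (fun k hk => mem_range.2 (mem_Ico.1 hk).2)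
      fun k hk _ => hc_nonneg k hk
  · rw [hF k]
    exact mul_sum_div_mul_sum_mul_eq _ _ hDpos.ne' (hF k ▸ (hFpos k hk).ne')

/-- The common lottery `c(k) = s_k/(D·F(k))` with `D = ∑_k s_k/F(k)` is
feasible (each type's total allocation probability is at most `1`, with
equality for the lowest type) and allocates exactly mass `s_k` to each
position `k`. -/
theorem stmt_11 (N : ℕ) (hN : 1 ≤ N) (s f F : ℕ → ℝ) (D : ℝ)
    (hs : ∀ k, k < N → 0 ≤ s k)
    (hfpos : ∀ i, i < N → 0 < f i)
    (hF : ∀ k, F k = ∑ j ∈ Finset.range (k + 1), f j)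
    (hD : D = ∑ k ∈ Finset.range N, s k / F k) (hDpos : 0 < D) :
    (∑ k ∈ Finset.range N, s k / (D * F k) = 1) ∧
    (∀ i, i < N → ∑ k ∈ Finset.Ico i N, s k / (D * F k) ≤ 1) ∧
    (∀ k, k < N →
      D * ∑ i ∈ Finset.range (k + 1), (s k / (D * F k)) * f i = s k) :=
  stmt_11_general N s f F D hs hfpos hF hD hDpos
end

section
/- In the setting of the previous contraction, the modified mechanism also preserves IC constraints toward type i from all other types: (a) types j ≥ k+1 are unaffected since a'(m,i) = a(m,i) for all m ≥ k+1 except m = k+1, where a'(k+1,i) < a(k+1,i), making mimicking type i weakly less attractive; (b) types j ≤ k-1 value the contraction at exactly the old value by linearity; (c) type k strictly loses from mimicking i since the only payoff-relevant change at or above θ_k is the decrease at position k+1. Formally: for every type j ≠ i, ∑_{m≥j}(x_m - θ_j)·a'(m,i) ≤ ∑_{m≥j}(x_m - θ_j)·a(m,i). -/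
/-!
Moving `ε` from positions `k - 1` and `k + 1` onto `k` is a mean-preserving contraction, and
type `j`'s gain from mimicking is the expectation of the convex payoff `m ↦ ((m - j)/(N - 1))⁺`
(positions below `j` contribute nothing). A contraction can only lower the expectation of a
convex function: here the change is `-ε` times the second difference of the payoff at `k`.
-/

open Finset

def contractionAt (k : ℕ) (ε : ℝ) (m : ℕ) : ℝ :=
  (if m = k then 2 * ε else 0) - (if m = k - 1 then ε else 0) - (if m = k + 1 then ε else 0)

lemma sum_mul_contractionAt {s : Finset ℕ} {k : ℕ} (ε : ℝ) (φ : ℕ → ℝ)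
    (hkm : k - 1 ∈ s) (hk : k ∈ s) (hkp : k + 1 ∈ s) :
    ∑ m ∈ s, φ m * contractionAt k ε m = ε * (2 * φ k - φ (k - 1) - φ (k + 1)) := by
  simp only [contractionAt, mul_sub, mul_ite, mul_zero, sum_sub_distrib, sum_ite_eq', hkm, hk,
    hkp, if_true]
  ring

lemma two_mul_max_zero_le (x h : ℝ) : 2 * max x 0 ≤ max (x - h) 0 + max (x + h) 0 := by
  rcases le_total x 0 with hx | hx <;>
    simp only [max_eq_right hx, max_eq_left hx] <;>
    linarith [le_max_left (x - h) 0, le_max_right (x - h) 0,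
      le_max_left (x + h) 0, le_max_right (x + h) 0]

lemma two_mul_max_div_sub_le {k : ℕ} (hk : 1 ≤ k) (D v : ℝ) :
    2 * max ((k : ℝ) / D - v) 0
      ≤ max (((k - 1 : ℕ) : ℝ) / D - v) 0 + max (((k + 1 : ℕ) : ℝ) / D - v) 0 := by
  convert two_mul_max_zero_le ((k : ℝ) / D - v) (1 / D) using 3
  · rw [Nat.cast_sub hk]; ring
  · push_cast; ring

lemma sum_Ico_eq_sum_range_max {j N : ℕ} {f : ℕ → ℝ} (g : ℕ → ℝ)
    (hf_neg : ∀ m < j, f m ≤ 0) (hf_pos : ∀ m, j ≤ m → 0 ≤ f m) :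
    ∑ m ∈ Ico j N, f m * g m = ∑ m ∈ range N, max (f m) 0 * g m := by
  refine sum_subset_zero_on_sdiff (fun m hm => mem_range.2 (mem_Ico.1 hm).2) ?_ ?_
  · intro m hm
    obtain ⟨hmN, hmj⟩ := mem_sdiff.1 hm
    have hlt : m < j := by
      by_contra h
      exact hmj (mem_Ico.2 ⟨not_lt.1 h, mem_range.1 hmN⟩)
    rw [max_eq_right (hf_neg m hlt), zero_mul]
  · intro m hm
    rw [max_eq_left (hf_pos m (mem_Ico.1 hm).1)]

theorem stmt_14_general (N : ℕ)
    (a a' : ℕ → ℕ → ℝ)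
    (k i : ℕ) (hik : i < k) (hkN : k + 1 < N)
    (ε : ℝ) (hε : 0 < ε)
    (ha' : ∀ m j, a' m j =
      if j = i then
        (if m = k - 1 then a m i - ε
         else if m = k then a m i + 2 * ε
         else if m = k + 1 then a m i - ε
         else a m i)
      else a m j) :
    ∀ j, j < N → j ≠ i →
      ∑ m ∈ Finset.Ico j N,
          ((m : ℝ) / ((N : ℝ) - 1) - (j : ℝ) / ((N : ℝ) - 1)) * a' m i
        ≤ ∑ m ∈ Finset.Ico j N,
          ((m : ℝ) / ((N : ℝ) - 1) - (j : ℝ) / ((N : ℝ) - 1)) * a m i := by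
  intro j _ _
  set W : ℕ → ℝ := fun m => (m : ℝ) / ((N : ℝ) - 1) - (j : ℝ) / ((N : ℝ) - 1)
  have hD : (0 : ℝ) ≤ (N : ℝ) - 1 := sub_nonneg.2 (by exact_mod_cast (show 1 ≤ N by omega))
  have ha'_eq : ∀ m, a' m i = a m i + contractionAt k ε m := by
    intro m
    rw [ha', if_pos rfl, contractionAt]
    split_ifs <;> first | omega | ring
  have hW_nonpos : ∀ m < j, W m ≤ 0 := fun m hm =>
    sub_nonpos.2 (div_le_div_of_nonneg_right (Nat.cast_le.2 hm.le) hD)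
  have hW_nonneg : ∀ m, j ≤ m → 0 ≤ W m := fun m hm =>
    sub_nonneg.2 (div_le_div_of_nonneg_right (Nat.cast_le.2 hm) hD)
  have hconv : 2 * max (W k) 0 ≤ max (W (k - 1)) 0 + max (W (k + 1)) 0 :=
    two_mul_max_div_sub_le (by omega) _ _
  have hmem : ∀ m, m ≤ k + 1 → m ∈ range N := fun m hm => mem_range.2 (by omega)
  calc ∑ m ∈ Ico j N, W m * a' m i
      = ∑ m ∈ Ico j N, W m * a m i + ∑ m ∈ Ico j N, W m * contractionAt k ε m := by
        simp only [ha'_eq, mul_add, sum_add_distrib]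
    _ = ∑ m ∈ Ico j N, W m * a m i + ∑ m ∈ range N, max (W m) 0 * contractionAt k ε m := by
        rw [sum_Ico_eq_sum_range_max (contractionAt k ε) hW_nonpos hW_nonneg]
    _ = ∑ m ∈ Ico j N, W m * a m i
          + ε * (2 * max (W k) 0 - max (W (k - 1)) 0 - max (W (k + 1)) 0) := by
        rw [sum_mul_contractionAt _ _ (hmem _ (by omega)) (hmem _ (by omega)) (hmem _ le_rfl)]
    _ ≤ ∑ m ∈ Ico j N, W m * a m i := by linarith [mul_nonneg hε.le (sub_nonneg.2 hconv)]

/-- The mean-preserving contraction of type `i`'s lottery around position `k`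
makes mimicking type `i` weakly less attractive for every other type `j`:
for all `j ≠ i`, `∑_{m≥j}(x_m - θ_j)·a'(m,i) ≤ ∑_{m≥j}(x_m - θ_j)·a(m,i)`. -/
theorem stmt_14 (N : ℕ) (hN : 2 ≤ N) (c : ℕ → ℝ) (hc : ∀ m, 0 ≤ c m)
    (a a' : ℕ → ℕ → ℝ)
    (ha : ∀ m i, a m i = if i ≤ m then c m else 0)
    (k i : ℕ) (hik : i < k) (hkN : k + 1 < N)
    (hpos : 0 < c (k - 1) ∧ 0 < c k ∧ 0 < c (k + 1))
    (ε : ℝ) (hε : 0 < ε)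
    (ha' : ∀ m j, a' m j =
      if j = i then
        (if m = k - 1 then a m i - ε
         else if m = k then a m i + 2 * ε
         else if m = k + 1 then a m i - ε
         else a m i)
      else a m j) :
    ∀ j, j < N → j ≠ i →
      ∑ m ∈ Finset.Ico j N,
          ((m : ℝ) / ((N : ℝ) - 1) - (j : ℝ) / ((N : ℝ) - 1)) * a' m i
        ≤ ∑ m ∈ Finset.Ico j N,
          ((m : ℝ) / ((N : ℝ) - 1) - (j : ℝ) / ((N : ℝ) - 1)) * a m i :=
  stmt_14_general N a a' k i hik hkN ε hε ha'
end

section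
/- Suppose 1/F is convex on the grid and V : ℝ^N → ℝ is any objective. If s* maximizes V(s) over the set {s ∈ ℝ≥0^N : s_k ≤ g(k) for all k, ∑_k s_k/F(k) ≤ D}, then the common lottery with c(k) = s*_k/(D·F(k)) is an optimal feasible direct mechanism: no feasible direct mechanism a (satisfying IC, ex-post IR, position capacities g, agent feasibility with population mass D) achieves V(s(a)) > V(s*), where s_k(a) = D·∑_{i≤k} a(k,i)·f(i). -/
/-!
Write `U t` for the surplus of type `t` when reporting truthfully. Summation by parts expresses
the cost `∑ₖ a(k,i) / F k` of type `i`'s lottery through its tail masses, i.e. through the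
differences of the surpluses it gives to the types above `i`. Downward incentive constraints and
convexity of `1/F` let a second summation by parts replace those surpluses by `U`, and the upward
constraint between neighbours gives `U t - U (t + 1) ≥` the mass of type `t + 1`. Weighting by
`f i`, the bounds telescope because `F t * (1 / F (t + 1) - 1 / F t) = -f (t + 1) / F (t + 1)`:
the budget used by `a` is at most `D` times the mass of type `0`, so `s(a)` lies in the budget set.
-/

open Finset

namespace PositionMechanism

/-- Utility that type `t` draws from the position lottery `x` when position `k` is worth `k - t`
to it; the valuations in the mechanism are these divided by `N - 1`. -/
noncomputable def surplus (N : ℕ) (x : ℕ → ℝ) (t : ℕ) : ℝ :=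
  ∑ k ∈ Ico t N, ((k : ℝ) - t) * x k

def IsIncentiveCompatible (N : ℕ) (a : ℕ → ℕ → ℝ) : Prop :=
  ∀ t j, t < N → j < N → surplus N (a · j) t ≤ surplus N (a · t) t

lemma isIncentiveCompatible_of_div {N : ℕ} {a : ℕ → ℕ → ℝ} (hN : 2 ≤ N)
    (hIC : ∀ i, i < N → ∀ j, j < N →
      ∑ k ∈ Ico i N, ((k : ℝ) / ((N : ℝ) - 1) - (i : ℝ) / ((N : ℝ) - 1)) * a k j ≤
        ∑ k ∈ Ico i N, ((k : ℝ) / ((N : ℝ) - 1) - (i : ℝ) / ((N : ℝ) - 1)) * a k i) :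
    IsIncentiveCompatible N a := by
  intro t j ht hj
  have hpos : (0 : ℝ) < (N : ℝ) - 1 := by
    have : (2 : ℝ) ≤ N := by exact_mod_cast hN
    linarith
  have hscale : ∀ j,
      ∑ k ∈ Ico t N, ((k : ℝ) / ((N : ℝ) - 1) - (t : ℝ) / ((N : ℝ) - 1)) * a k j
        = surplus N (a · j) t / ((N : ℝ) - 1) := fun j => by
    rw [surplus, sum_div]
    exact sum_congr rfl fun k _ => by ring
  have := hIC t ht j hj
  rwa [hscale, hscale, div_le_div_iff_of_pos_right hpos] at this

lemma surplus_sub_one (N : ℕ) (x : ℕ → ℝ) : surplus N x (N - 1) = 0 := by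
  refine sum_eq_zero fun k hk => ?_
  obtain rfl : k = N - 1 := by rw [mem_Ico] at hk; omega
  simp

lemma sum_Ico_succ_eq_surplus_sub {N t : ℕ} (x : ℕ → ℝ) (ht : t < N) :
    ∑ k ∈ Ico (t + 1) N, x k = surplus N x t - surplus N x (t + 1) := by
  rw [surplus, surplus, sum_eq_sum_Ico_succ_bot ht, sub_self, zero_mul, zero_add,
    eq_sub_iff_add_eq, ← sum_add_distrib]
  refine sum_congr rfl fun k _ => ?_
  push_cast
  ring

lemma sum_Ico_mul_eq_add_sum_tail (x w : ℕ → ℝ) (i N : ℕ) :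
    ∑ k ∈ Ico i N, x k * w k = (∑ k ∈ Ico i N, x k) * w i
      + ∑ t ∈ Ico i (N - 1), (w (t + 1) - w t) * ∑ k ∈ Ico (t + 1) N, x k := by
  simp_rw [mul_sum (s := Ico _ N)]
  rw [sum_comm' (t' := Ico i N) (s' := fun k => Ico i k) fun t k => by simp only [mem_Ico]; omega,
    sum_mul, ← sum_add_distrib]
  refine sum_congr rfl fun k hk => ?_
  rw [← sum_mul, sum_Ico_sub w (mem_Ico.1 hk).1]
  ring

lemma sum_Ico_mul_sub_succ_eq {i M : ℕ} (δ D : ℕ → ℝ) (hi : D i = 0) (hM : D M = 0) :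
    ∑ t ∈ Ico i M, δ t * (D t - D (t + 1))
      = ∑ t ∈ Ico i (M - 1), (δ (t + 1) - δ t) * D (t + 1) := by
  rcases lt_or_ge i M with hiM | hMi
  · have htel : ∑ t ∈ Ico i M, (δ (t + 1) * D (t + 1) - δ t * D t) = 0 := by
      rw [sum_Ico_sub (fun t => δ t * D t) hiM.le, hi, hM]
      ring
    calc ∑ t ∈ Ico i M, δ t * (D t - D (t + 1))
        = ∑ t ∈ Ico i M, (δ (t + 1) - δ t) * D (t + 1)
          - ∑ t ∈ Ico i M, (δ (t + 1) * D (t + 1) - δ t * D t) := by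
          rw [← sum_sub_distrib]
          exact sum_congr rfl fun t _ => by ring
      _ = ∑ t ∈ Ico i (M - 1), (δ (t + 1) - δ t) * D (t + 1) := by
          obtain ⟨n, rfl⟩ : ∃ n, M = n + 1 := ⟨M - 1, by omega⟩
          rw [htel, sum_Ico_succ_top (by omega), hM, Nat.add_sub_cancel]
          ring
  · simp [Ico_eq_empty_of_le hMi, Ico_eq_empty_of_le (by omega : M - 1 ≤ i)]

lemma sum_Ico_mul_le_of_surplus_le {N i : ℕ} {x w U : ℕ → ℝ}
    (hw : ∀ t, t + 2 < N → w (t + 1) - w t ≤ w (t + 2) - w (t + 1))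
    (hi : U i = surplus N x i) (hlast : U (N - 1) = 0)
    (hU : ∀ t, i < t → t < N - 1 → surplus N x t ≤ U t) :
    ∑ k ∈ Ico i N, x k * w k ≤ (∑ k ∈ Ico i N, x k) * w i
      + ∑ t ∈ Ico i (N - 1), (w (t + 1) - w t) * (U t - U (t + 1)) := by
  set gap := fun t => U t - surplus N x t
  have hgap : 0 ≤ ∑ t ∈ Ico i (N - 1), (w (t + 1) - w t) * (gap t - gap (t + 1)) := by
    rw [sum_Ico_mul_sub_succ_eq _ gap (by simp [gap, hi]) (by simp [gap, hlast, surplus_sub_one])]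
    refine sum_nonneg fun t ht => ?_
    rw [mem_Ico] at ht
    exact mul_nonneg (sub_nonneg.2 (hw t (by omega)))
      (sub_nonneg.2 (hU (t + 1) (by omega) (by omega)))
  have htail : ∀ t ∈ Ico i (N - 1), ∑ k ∈ Ico (t + 1) N, x k
      = surplus N x t - surplus N x (t + 1) :=
    fun t ht => sum_Ico_succ_eq_surplus_sub x (by rw [mem_Ico] at ht; omega)
  rw [sum_Ico_mul_eq_add_sum_tail, add_le_add_iff_left, ← sub_nonneg, ← sum_sub_distrib]
  refine hgap.trans_eq (sum_congr rfl fun t ht => ?_)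
  rw [htail t ht]
  ring

namespace IsIncentiveCompatible

variable {N : ℕ} {a : ℕ → ℕ → ℝ}

lemma sum_Ico_le_surplus_sub (hIC : IsIncentiveCompatible N a) {t : ℕ} (ht : t + 1 < N) :
    ∑ k ∈ Ico (t + 1) N, a k (t + 1)
      ≤ surplus N (a · t) t - surplus N (a · (t + 1)) (t + 1) := by
  rw [sum_Ico_succ_eq_surplus_sub _ (by omega : t < N)]
  linarith [hIC t (t + 1) (by omega) ht]

lemma sum_Ico_mul_le {w : ℕ → ℝ} (hIC : IsIncentiveCompatible N a)
    (hw : ∀ t, t + 2 < N → w (t + 1) - w t ≤ w (t + 2) - w (t + 1))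
    (hanti : ∀ t, t + 1 < N → w (t + 1) ≤ w t) {i : ℕ} (hi : i < N) :
    ∑ k ∈ Ico i N, a k i * w k ≤ (∑ k ∈ Ico i N, a k i) * w i
      + ∑ t ∈ Ico i (N - 1), (w (t + 1) - w t) * ∑ k ∈ Ico (t + 1) N, a k (t + 1) := by
  refine (sum_Ico_mul_le_of_surplus_le (U := fun t => surplus N (a · t) t) hw rfl
    (surplus_sub_one N _) fun t (_ : i < t) (ht : t < N - 1) => hIC t i (by omega) hi).trans ?_
  refine add_le_add le_rfl (sum_le_sum fun t ht => ?_)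
  rw [mem_Ico] at ht
  exact mul_le_mul_of_nonpos_left (hIC.sum_Ico_le_surplus_sub (t := t) (by omega))
    (sub_nonpos.2 (hanti t (by omega)))

end IsIncentiveCompatible

lemma sum_mul_sum_Ico_eq (f g : ℕ → ℝ) {M N : ℕ} (hMN : M ≤ N) :
    ∑ i ∈ range N, f i * ∑ t ∈ Ico i M, g t
      = ∑ t ∈ range M, (∑ i ∈ range (t + 1), f i) * g t := by
  simp_rw [mul_sum, sum_mul]
  exact sum_comm' fun i t => by simp only [mem_range, mem_Ico]; omega

section CumulativeWeights

variable {N : ℕ} {f F : ℕ → ℝ}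

lemma cumulative_pos (hfpos : ∀ i, i < N → 0 < f i)
    (hF : ∀ k, F k = ∑ j ∈ range (k + 1), f j) {k : ℕ} (hk : k < N) : 0 < F k := by
  rw [hF]
  exact sum_pos (fun j hj => hfpos j (by rw [mem_range] at hj; omega)) nonempty_range_add_one

lemma one_div_cumulative_succ_le (hfpos : ∀ i, i < N → 0 < f i)
    (hF : ∀ k, F k = ∑ j ∈ range (k + 1), f j) {t : ℕ} (ht : t + 1 < N) :
    1 / F (t + 1) ≤ 1 / F t := by
  refine one_div_le_one_div_of_le (cumulative_pos hfpos hF (by omega)) ?_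
  rw [hF, hF, sum_range_succ _ (t + 1)]
  linarith [hfpos (t + 1) ht]

lemma cumulative_mul_one_div_succ_sub (hfpos : ∀ i, i < N → 0 < f i)
    (hF : ∀ k, F k = ∑ j ∈ range (k + 1), f j) {t : ℕ} (ht : t + 1 < N) :
    F t * (1 / F (t + 1) - 1 / F t) = -(f (t + 1) / F (t + 1)) := by
  have h0 := cumulative_pos hfpos hF (by omega : t < N)
  have h1 := cumulative_pos hfpos hF ht
  have hsucc : F (t + 1) = F t + f (t + 1) := by rw [hF, hF, sum_range_succ _ (t + 1)]
  field_simp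
  rw [hsucc]
  ring

lemma sum_mul_add_sum_Ico_eq (hfpos : ∀ i, i < N → 0 < f i)
    (hF : ∀ k, F k = ∑ j ∈ range (k + 1), f j) (hN : 0 < N) (c : ℕ → ℝ) :
    ∑ i ∈ range N, f i * (c i * (1 / F i)
      + ∑ t ∈ Ico i (N - 1), (1 / F (t + 1) - 1 / F t) * c (t + 1)) = c 0 := by
  simp_rw [mul_add, sum_add_distrib]
  rw [sum_mul_sum_Ico_eq f _ (Nat.sub_le N 1)]
  have hshift : ∀ t ∈ range (N - 1),
      (∑ i ∈ range (t + 1), f i) * ((1 / F (t + 1) - 1 / F t) * c (t + 1))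
        = -(f (t + 1) * (c (t + 1) * (1 / F (t + 1)))) := fun t ht => by
    rw [mem_range] at ht
    rw [← hF, ← mul_assoc, cumulative_mul_one_div_succ_sub hfpos hF (by omega)]
    ring
  obtain ⟨n, rfl⟩ : ∃ n, N = n + 1 := ⟨N - 1, by omega⟩
  rw [sum_congr rfl hshift, sum_neg_distrib, Nat.add_sub_cancel, sum_range_succ',
    add_neg_cancel_comm, hF 0, sum_range_one]
  field_simp [(hfpos 0 hN).ne']

theorem sum_sum_mul_div_le {a : ℕ → ℕ → ℝ} (hfpos : ∀ i, i < N → 0 < f i)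
    (hF : ∀ k, F k = ∑ j ∈ range (k + 1), f j)
    (hconv : ∀ i, 0 < i → i + 1 < N → 2 / F i ≤ 1 / F (i - 1) + 1 / F (i + 1))
    (hIC : IsIncentiveCompatible N a) :
    ∑ k ∈ range N, (∑ i ∈ range (k + 1), a k i * f i) / F k
      ≤ ∑ k ∈ range N, a k 0 := by
  rcases N.eq_zero_or_pos with rfl | hN
  · simp
  have hw : ∀ t, t + 2 < N → 1 / F (t + 1) - 1 / F t ≤ 1 / F (t + 2) - 1 / F (t + 1) := by
    intro t ht
    have := hconv (t + 1) t.succ_pos ht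
    rw [Nat.add_sub_cancel] at this
    linarith [show 2 / F (t + 1) = 1 / F (t + 1) + 1 / F (t + 1) by ring]
  calc ∑ k ∈ range N, (∑ i ∈ range (k + 1), a k i * f i) / F k
      = ∑ i ∈ range N, f i * ∑ k ∈ Ico i N, a k i * (1 / F k) := by
        simp_rw [sum_div, mul_sum]
        refine (sum_comm' fun k i => by simp only [mem_range, mem_Ico]; omega).trans
          (sum_congr rfl fun i _ => sum_congr rfl fun k _ => by ring)
    _ ≤ ∑ i ∈ range N, f i * ((∑ k ∈ Ico i N, a k i) * (1 / F i)
          + ∑ t ∈ Ico i (N - 1),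
              (1 / F (t + 1) - 1 / F t) * ∑ k ∈ Ico (t + 1) N, a k (t + 1)) :=
        sum_le_sum fun i hi => mul_le_mul_of_nonneg_left
          (hIC.sum_Ico_mul_le hw (fun t ht => one_div_cumulative_succ_le hfpos hF ht)
            (mem_range.1 hi))
          (hfpos i (mem_range.1 hi)).le
    _ = ∑ k ∈ range N, a k 0 := by
        rw [sum_mul_add_sum_Ico_eq hfpos hF hN (fun i => ∑ k ∈ Ico i N, a k i), range_eq_Ico]

end CumulativeWeights

end PositionMechanism

theorem stmt_15_general (N : ℕ) (hN : 2 ≤ N) (f F g : ℕ → ℝ) (D : ℝ) (hD : 0 < D)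
    (hfpos : ∀ i, i < N → 0 < f i)
    (hF : ∀ k, F k = ∑ j ∈ Finset.range (k + 1), f j)
    (hconv : ∀ i, 0 < i → i + 1 < N → 2 / F i ≤ 1 / F (i - 1) + 1 / F (i + 1))
    (V : (ℕ → ℝ) → ℝ) (sstar : ℕ → ℝ)
    (hopt : ∀ s : ℕ → ℝ, (∀ k, k < N → 0 ≤ s k ∧ s k ≤ g k) →
      ∑ k ∈ Finset.range N, s k / F k ≤ D → V s ≤ V sstar) :
    ∀ a : ℕ → ℕ → ℝ,
      (∀ k i, 0 ≤ a k i) →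
      (∀ k i, k < i → a k i = 0) →
      (∀ i, i < N → ∀ j, j < N →
        ∑ k ∈ Finset.Ico i N,
            ((k : ℝ) / ((N : ℝ) - 1) - (i : ℝ) / ((N : ℝ) - 1)) * a k j
          ≤ ∑ k ∈ Finset.Ico i N,
            ((k : ℝ) / ((N : ℝ) - 1) - (i : ℝ) / ((N : ℝ) - 1)) * a k i) →
      (∀ i, i < N → ∑ k ∈ Finset.range N, a k i ≤ 1) →
      (∀ k, k < N → D * ∑ i ∈ Finset.range (k + 1), a k i * f i ≤ g k) →
      V (fun k => if k < N then D * ∑ i ∈ Finset.range (k + 1), a k i * f i else 0)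
        ≤ V sstar := by
  intro a ha0 _ hIC hfe hcap
  apply hopt
  · intro k hk
    rw [if_pos hk]
    refine ⟨mul_nonneg hD.le (sum_nonneg fun i hi => mul_nonneg (ha0 k i) (hfpos i ?_).le),
      hcap k hk⟩
    rw [mem_range] at hi
    omega
  · calc ∑ k ∈ range N,
          (if k < N then D * ∑ i ∈ range (k + 1), a k i * f i else 0) / F k
        = D * ∑ k ∈ range N, (∑ i ∈ range (k + 1), a k i * f i) / F k := by
          rw [mul_sum]
          exact sum_congr rfl fun k hk => by rw [if_pos (mem_range.1 hk), mul_div_assoc]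
      _ ≤ D * 1 := mul_le_mul_of_nonneg_left ((PositionMechanism.sum_sum_mul_div_le hfpos hF hconv
          (PositionMechanism.isIncentiveCompatible_of_div hN hIC)).trans (hfe 0 (by omega))) hD.le
      _ = D := mul_one D

/-- Reduction to a consumer-choice problem: if `1/F` is convex and `s*`
maximizes `V` over the budget set `{s ≥ 0 : s_k ≤ g(k), ∑_k s_k/F(k) ≤ D}`,
then no feasible direct mechanism `a` achieves a higher value of `V` applied
to its vector of allocated position masses `s_k(a) = D·∑_{i≤k} a(k,i)·f(i)`. -/
theorem stmt_15 (N : ℕ) (hN : 2 ≤ N) (f F g : ℕ → ℝ) (D : ℝ) (hD : 0 < D)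
    (hfpos : ∀ i, i < N → 0 < f i)
    (hF : ∀ k, F k = ∑ j ∈ Finset.range (k + 1), f j)
    (hconv : ∀ i, 0 < i → i + 1 < N → 2 / F i ≤ 1 / F (i - 1) + 1 / F (i + 1))
    (V : (ℕ → ℝ) → ℝ) (sstar : ℕ → ℝ)
    (hfeas : (∀ k, k < N → 0 ≤ sstar k ∧ sstar k ≤ g k) ∧
      ∑ k ∈ Finset.range N, sstar k / F k ≤ D)
    (hopt : ∀ s : ℕ → ℝ, (∀ k, k < N → 0 ≤ s k ∧ s k ≤ g k) →
      ∑ k ∈ Finset.range N, s k / F k ≤ D → V s ≤ V sstar) :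
    ∀ a : ℕ → ℕ → ℝ,
      (∀ k i, 0 ≤ a k i) →
      (∀ k i, k < i → a k i = 0) →
      (∀ i, i < N → ∀ j, j < N →
        ∑ k ∈ Finset.Ico i N,
            ((k : ℝ) / ((N : ℝ) - 1) - (i : ℝ) / ((N : ℝ) - 1)) * a k j
          ≤ ∑ k ∈ Finset.Ico i N,
            ((k : ℝ) / ((N : ℝ) - 1) - (i : ℝ) / ((N : ℝ) - 1)) * a k i) →
      (∀ i, i < N → ∑ k ∈ Finset.range N, a k i ≤ 1) →
      (∀ k, k < N → D * ∑ i ∈ Finset.range (k + 1), a k i * f i ≤ g k) →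
      V (fun k => if k < N then D * ∑ i ∈ Finset.range (k + 1), a k i * f i else 0)
        ≤ V sstar :=
  stmt_15_general N hN f F g D hD hfpos hF hconv V sstar hopt
end

section
/- Suppose 1/F is convex. Define q_k = g(k)/(D·F(k)) and Q_k = min{1, ∑_{k'=k+1}^{N-1} q_{k'}}. The common lottery c(k) = min{q_k, 1 - Q_k} maximizes total fill ∑_k s_k over the budget set {s ∈ ℝ≥0^N : s_k ≤ g(k), ∑_k s_k/F(k) ≤ D}: i.e., setting s_k = D·F(k)·c(k), the vector s is feasible and achieves the maximum of ∑_k s_k. -/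
/-!
Writing `a_k = s_k / F(k)` for the budget share of position `k`, the problem becomes: maximize
`∑ F(k) a_k` subject to `0 ≤ a_k ≤ D q_k` and `∑ a_k ≤ D`. The common lottery fills from the top,
so its shares `a_k = D c_k` have tail sums `∑_{j ≥ k} a_j = D · min 1 (∑_{j ≥ k} q_j)`, the largest
tail sums any feasible share vector can have. Since `F` is nonnegative and nondecreasing,
domination of all tail sums implies domination of the `F`-weighted sums (summation by parts).
-/

open Finset

section TailSums

variable {N : ℕ} {w d a b : ℕ → ℝ}

theorem sum_Ico_mul_le_mul_sum_Ico (hw : ∀ k, k + 1 < N → w k ≤ w (k + 1))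
    (hd : ∀ k ≤ N, ∑ j ∈ Ico k N, d j ≤ 0) {k : ℕ} (hk : k ≤ N) :
    ∑ j ∈ Ico k N, w j * d j ≤ w k * ∑ j ∈ Ico k N, d j := by
  induction hk using Nat.decreasingInduction with
  | self => simp
  | of_succ k hk ih =>
    rw [sum_eq_sum_Ico_succ_bot hk, sum_eq_sum_Ico_succ_bot hk, mul_add]
    rcases Nat.lt_or_ge (k + 1) N with hk' | hk'
    · have := mul_le_mul_of_nonpos_right (hw k hk') (hd (k + 1) hk)
      linarith
    · simp [Ico_eq_empty_of_le hk']

theorem sum_mul_le_sum_mul_of_sum_Ico_le (hw₀ : ∀ k < N, 0 ≤ w k)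
    (hw : ∀ k, k + 1 < N → w k ≤ w (k + 1))
    (hab : ∀ k ≤ N, ∑ j ∈ Ico k N, a j ≤ ∑ j ∈ Ico k N, b j) :
    ∑ j ∈ range N, w j * a j ≤ ∑ j ∈ range N, w j * b j := by
  have hd : ∀ k ≤ N, ∑ j ∈ Ico k N, (a j - b j) ≤ 0 := fun k hk => by
    simpa [sum_sub_distrib] using hab k hk
  have h := sum_Ico_mul_le_mul_sum_Ico hw hd (Nat.zero_le N)
  rcases N.eq_zero_or_pos with rfl | hN
  · simp
  · have := mul_nonpos_of_nonneg_of_nonpos (hw₀ 0 hN) (hd 0 hN.le)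
    simp only [mul_sub, sum_sub_distrib, ← range_eq_Ico] at h this
    linarith

theorem sum_Ico_eq_min_of_fill_from_top {q c : ℕ → ℝ} {B : ℝ} (hq : ∀ j < N, 0 ≤ q j)
    (hc : ∀ j, c j = min (q j) (B - min B (∑ i ∈ Ico (j + 1) N, q i))) (hB : 0 ≤ B) {k : ℕ}
    (hk : k ≤ N) :
    ∑ j ∈ Ico k N, c j = min B (∑ j ∈ Ico k N, q j) := by
  induction hk using Nat.decreasingInduction with
  | self => simp [hB]
  | of_succ k hk ih =>
    rw [sum_eq_sum_Ico_succ_bot hk, sum_eq_sum_Ico_succ_bot hk, ih, hc k]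
    have := hq k hk
    simp only [min_def]
    split_ifs <;> linarith

theorem sum_Ico_le_min_of_le_of_sum_range_le {u : ℕ → ℝ} {B : ℝ} (ha₀ : ∀ j < N, 0 ≤ a j)
    (hau : ∀ j < N, a j ≤ u j) (haB : ∑ j ∈ range N, a j ≤ B) (k : ℕ) :
    ∑ j ∈ Ico k N, a j ≤ min B (∑ j ∈ Ico k N, u j) := by
  refine le_min (le_trans ?_ haB) (sum_le_sum fun j hj => hau j (mem_Ico.mp hj).2)
  rw [range_eq_Ico]
  exact sum_le_sum_of_subset_of_nonneg (Ico_subset_Ico_left k.zero_le)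
    fun j hj _ => ha₀ j (mem_Ico.mp hj).2

end TailSums

theorem stmt_16_general (N : ℕ) (F g : ℕ → ℝ) (D : ℝ) (hD : 0 < D)
    (hpos : ∀ k, k < N → 0 < F k)
    (hmono : ∀ k, k + 1 < N → F k ≤ F (k + 1))
    (hg : ∀ k, k < N → 0 ≤ g k)
    (q Q c s : ℕ → ℝ)
    (hq : ∀ k, q k = g k / (D * F k))
    (hQ : ∀ k, Q k = min 1 (∑ k' ∈ Finset.Ico (k + 1) N, q k'))
    (hc : ∀ k, c k = min (q k) (1 - Q k))
    (hs : ∀ k, s k = D * F k * c k) :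
    ((∀ k, k < N → 0 ≤ s k ∧ s k ≤ g k) ∧
      ∑ k ∈ Finset.range N, s k / F k ≤ D) ∧
    (∀ s' : ℕ → ℝ, (∀ k, k < N → 0 ≤ s' k ∧ s' k ≤ g k) →
      ∑ k ∈ Finset.range N, s' k / F k ≤ D →
      ∑ k ∈ Finset.range N, s' k ≤ ∑ k ∈ Finset.range N, s k) := by
  have hDF : ∀ k < N, 0 < D * F k := fun k hk => mul_pos hD (hpos k hk)
  have hDq : ∀ k < N, D * q k = g k / F k := fun k hk => by
    rw [hq]; field_simp [(hpos k hk).ne']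
  have hq₀ : ∀ k < N, 0 ≤ q k := fun k hk => hq k ▸ div_nonneg (hg k hk) (hDF k hk).le
  have hc₀ : ∀ k < N, 0 ≤ c k := fun k hk => by
    rw [hc, hQ]; exact le_min (hq₀ k hk) (by linarith [min_le_left 1 (∑ j ∈ Ico (k + 1) N, q j)])
  have hshare : ∀ k < N, s k / F k = D * c k := fun k hk => by
    rw [hs]; field_simp [(hpos k hk).ne']
  have htail : ∀ k ≤ N, ∑ j ∈ Ico k N, s j / F j = D * min 1 (∑ j ∈ Ico k N, q j) :=
    fun k hk => by
      rw [sum_congr rfl fun j hj => hshare j (mem_Ico.mp hj).2, ← mul_sum,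
        sum_Ico_eq_min_of_fill_from_top hq₀ (fun j => by rw [hc, hQ]) zero_le_one hk]
  refine ⟨⟨fun k hk => ⟨?_, ?_⟩, ?_⟩, fun s' hs' hbudget => ?_⟩
  · rw [hs]; exact mul_nonneg (hDF k hk).le (hc₀ k hk)
  · rw [hs, ← mul_div_cancel₀ (g k) (hDF k hk).ne', ← hq]
    exact mul_le_mul_of_nonneg_left (hc k ▸ min_le_left _ _) (hDF k hk).le
  · rw [range_eq_Ico, htail 0 N.zero_le]
    exact mul_le_of_le_one_right hD.le (min_le_left _ _)
  · have hdom : ∀ k ≤ N, ∑ j ∈ Ico k N, s' j / F j ≤ ∑ j ∈ Ico k N, s j / F j := by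
      intro k hk
      rw [htail k hk, mul_min_of_nonneg _ _ hD.le, mul_one, mul_sum]
      refine sum_Ico_le_min_of_le_of_sum_range_le
        (fun j hj => div_nonneg (hs' j hj).1 (hpos j hj).le) (fun j hj => ?_) hbudget k
      rw [hDq j hj]
      exact div_le_div_of_nonneg_right (hs' j hj).2 (hpos j hj).le
    have hweighted := sum_mul_le_sum_mul_of_sum_Ico_le (fun k hk => (hpos k hk).le) hmono hdom
    have hcancel : ∀ t : ℕ → ℝ, ∑ j ∈ range N, F j * (t j / F j) = ∑ j ∈ range N, t j :=
      fun t => sum_congr rfl fun j hj => mul_div_cancel₀ _ (hpos j (mem_range.mp hj)).ne'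
    rwa [hcancel, hcancel] at hweighted

/-- Optimal common lottery for the fill objective: with
`q_k = g(k)/(D·F(k))`, `Q_k = min{1, ∑_{k'>k} q_{k'}}` and
`c(k) = min{q_k, 1 - Q_k}`, the vector `s_k = D·F(k)·c(k)` is feasible for the
budget set and maximizes total fill `∑_k s_k` over it. -/
theorem stmt_16 (N : ℕ) (hN : 1 ≤ N) (F g : ℕ → ℝ) (D : ℝ) (hD : 0 < D)
    (hpos : ∀ k, k < N → 0 < F k)
    (hmono : ∀ k, k + 1 < N → F k ≤ F (k + 1))
    (hconv : ∀ i, 0 < i → i + 1 < N → 2 / F i ≤ 1 / F (i - 1) + 1 / F (i + 1))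
    (hg : ∀ k, k < N → 0 ≤ g k)
    (q Q c s : ℕ → ℝ)
    (hq : ∀ k, q k = g k / (D * F k))
    (hQ : ∀ k, Q k = min 1 (∑ k' ∈ Finset.Ico (k + 1) N, q k'))
    (hc : ∀ k, c k = min (q k) (1 - Q k))
    (hs : ∀ k, s k = D * F k * c k) :
    ((∀ k, k < N → 0 ≤ s k ∧ s k ≤ g k) ∧
      ∑ k ∈ Finset.range N, s k / F k ≤ D) ∧
    (∀ s' : ℕ → ℝ, (∀ k, k < N → 0 ≤ s' k ∧ s' k ≤ g k) →
      ∑ k ∈ Finset.range N, s' k / F k ≤ D →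
      ∑ k ∈ Finset.range N, s' k ≤ ∑ k ∈ Finset.range N, s k) :=
  stmt_16_general N F g D hD hpos hmono hg q Q c s hq hQ hc hs
end
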